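/- arXiv:2006.16000 — 5 statements merged into one kernel-verified Lean document; each statement's English description precedes it below -/
import Mathlib

section
/- If a subset A of Baire space ℕ^ℕ is Hurewicz, then for every continuous map f : A → ℕ^ℕ the image f[A] is bounded in the eventual-dominance order ≤*. -/
def HurewiczSet {X : Type*} [TopologicalSpace X] (A : Set X) : Prop :=
  ∀ U : ℕ → Set (Set X), (∀ n, ∀ s ∈ U n, IsOpen s) → (∀ n, A ⊆ ⋃₀ U n) →
    ∃ V : ℕ → Finset (Set X), (∀ n, ↑(V n) ⊆ U n) ∧
      ∀ x ∈ A, ∀ᶠ n in Filter.atTop, x ∈ ⋃₀ ((V n : Set (Set X)))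

/-! For each `n`, the sets `{a | f a n ≤ k}` (`k ∈ ℕ`) are open and cover `A`. The Hurewicz
property selects finitely many of them for each `n` so that every point lies in a selected set for
almost all `n`; the largest selected index is then the value `g n` of the dominating function. -/

open Filter

namespace HurewiczSet

variable {X : Type*} [TopologicalSpace X] {A : Set X}

theorem exists_eventually_mem_of_nat_covers (h : HurewiczSet A) (O : ℕ → ℕ → Set X)
    (hO : ∀ n k, IsOpen (O n k)) (hA : ∀ n, A ⊆ ⋃ k, O n k) :
    ∃ m : ℕ → ℕ, ∀ x ∈ A, ∀ᶠ n in atTop, ∃ k ≤ m n, x ∈ O n k := by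
  classical
  obtain ⟨V, hVU, hV⟩ := h (fun n => Set.range (O n)) (by rintro n _ ⟨k, rfl⟩; exact hO n k)
    (fun n => by simpa only [Set.sUnion_range] using hA n)
  have hindex : ∀ n, ∃ I : Finset ℕ, I.image (O n) = V n := fun n => by
    obtain ⟨I, -, hI⟩ := Finset.subset_set_image_iff.mp (Set.image_univ ▸ hVU n)
    exact ⟨I, hI⟩
  choose I hI using hindex
  refine ⟨fun n => (I n).sup id, fun x hx => ?_⟩
  filter_upwards [hV x hx] with n ⟨t, htV, hxt⟩
  obtain ⟨k, hk, rfl⟩ := Finset.mem_image.mp (hI n ▸ htV)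
  exact ⟨k, Finset.le_sup (f := id) hk, hxt⟩

theorem exists_eventually_le_of_continuous (h : HurewiczSet A) {f : A → ℕ → ℕ}
    (hf : Continuous f) : ∃ g : ℕ → ℕ, ∀ a : A, ∀ᶠ n in atTop, f a n ≤ g n := by
  have hopen (n k : ℕ) : IsOpen {a : A | f a n ≤ k} :=
    (isOpen_discrete {m | m ≤ k}).preimage ((continuous_apply n).comp hf)
  choose O hO hOA using fun n k => isOpen_induced_iff.mp (hopen n k)
  have hmem {a : A} {n k : ℕ} : (a : X) ∈ O n k ↔ f a n ≤ k := Set.ext_iff.mp (hOA n k) a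
  obtain ⟨m, hm⟩ := h.exists_eventually_mem_of_nat_covers O hO fun n a ha =>
    Set.mem_iUnion.mpr ⟨f ⟨a, ha⟩ n, hmem.mpr le_rfl⟩
  refine ⟨m, fun a => ?_⟩
  filter_upwards [hm a a.2] with n ⟨k, hkm, hak⟩
  exact (hmem.mp hak).trans hkm

end HurewiczSet

theorem hurewicz_continuous_image_bounded (A : Set (ℕ → ℕ)) (h : HurewiczSet A)
    (f : ↥A → (ℕ → ℕ)) (hf : Continuous f) :
    ∃ g : ℕ → ℕ, ∀ a : ↥A, ∀ᶠ n in Filter.atTop, f a n ≤ g n :=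
  h.exists_eventually_le_of_continuous hf
end

section
/- If Γ is a family of subsets of ℝ satisfying the Hurewicz Dichotomy — i.e., for every A ∈ Γ that is not σ-compact there is a compact set K ⊆ ℝ such that K ∩ A is homeomorphic to the irrationals ℕ^ℕ — then every Menger member of Γ is σ-compact. -/
/-! A Menger set cannot map continuously onto the Baire space `ℕ → ℕ`: from the open covers
`{x | f x n ≤ k}`, `k ∈ ℕ`, the Menger property extracts finitely many `k` for each `n`, and their
maxima form a function `g` that no `f x` dominates, while `g + 1` is a value of `f`. Since closed
subsets of Menger sets are Menger, a Menger member `A` of `Γ` cannot contain a copy `K ∩ A` of the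
Baire space, so the dichotomy forces `A` to be σ-compact. -/

open Set

def MengerSet {X : Type*} [TopologicalSpace X] (A : Set X) : Prop :=
  ∀ U : ℕ → Set (Set X), (∀ n, ∀ s ∈ U n, IsOpen s) → (∀ n, A ⊆ ⋃₀ U n) →
    ∃ V : ℕ → Finset (Set X), (∀ n, ↑(V n) ⊆ U n) ∧
      A ⊆ ⋃ n, ⋃₀ ((V n : Set (Set X)))

namespace MengerSet

variable {X : Type*} [TopologicalSpace X] {A : Set X}

theorem exists_finset_subset_iUnion {ι : Type*} (hA : MengerSet A) (W : ℕ → ι → Set X)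
    (hW : ∀ n i, IsOpen (W n i)) (hcov : ∀ n, A ⊆ ⋃ i, W n i) :
    ∃ S : ℕ → Finset ι, A ⊆ ⋃ n, ⋃ i ∈ S n, W n i := by
  classical
  obtain ⟨V, hVW, hAV⟩ := hA (fun n => range (W n))
    (fun n => forall_mem_range.2 (hW n)) (fun n => by rw [sUnion_range]; exact hcov n)
  have hV : ∀ n, ∃ S : Finset ι, S.image (W n) = V n := fun n => by
    obtain ⟨S, -, hS⟩ := Finset.subset_set_image_iff.1 (image_univ ▸ hVW n)
    exact ⟨S, hS⟩
  choose S hS using hV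
  refine ⟨S, hAV.trans (iUnion_mono fun n => ?_)⟩
  rw [← hS n, Finset.coe_image, sUnion_image]
  rfl

theorem inter_isClosed {C : Set X} (hA : MengerSet A) (hC : IsClosed C) :
    MengerSet (C ∩ A) := by
  classical
  intro U hU hcov
  obtain ⟨V, hVU, hAV⟩ := hA (fun n => insert Cᶜ (U n))
    (fun n => forall_mem_insert.2 ⟨hC.isOpen_compl, hU n⟩)
    (fun n x hx => by
      by_cases hxC : x ∈ C
      · exact sUnion_mono (subset_insert _ _) (hcov n ⟨hxC, hx⟩)
      · exact ⟨Cᶜ, mem_insert _ _, hxC⟩)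
  refine ⟨fun n => (V n).erase Cᶜ, fun n t ht => ?_, fun x hx => ?_⟩
  · rw [Finset.coe_erase] at ht
    exact (hVU n ht.1).resolve_left ht.2
  · obtain ⟨n, t, ht, hxt⟩ := mem_iUnion.1 (hAV hx.2)
    have htC : t ≠ Cᶜ := by rintro rfl; exact hxt hx.1
    exact mem_iUnion.2 ⟨n, t, Finset.mem_erase.2 ⟨htC, ht⟩, hxt⟩

/-- The image of a Menger set under a continuous map to `ℕ → ℕ` is not dominating. -/
theorem exists_forall_exists_le_of_continuous (hA : MengerSet A) (f : A → ℕ → ℕ)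
    (hf : Continuous f) : ∃ g : ℕ → ℕ, ∀ x, ∃ n, f x n ≤ g n := by
  have hopen : ∀ n k, IsOpen {x : A | f x n ≤ k} := fun n k =>
    (isOpen_discrete {j | j ≤ k}).preimage ((continuous_apply n).comp hf)
  choose W hWo hW using fun n k => isOpen_induced_iff.1 (hopen n k)
  have hcov : ∀ n, A ⊆ ⋃ k, W n k := fun n x hx => by
    have hxW : (⟨x, hx⟩ : A) ∈ Subtype.val ⁻¹' W n (f ⟨x, hx⟩ n) := by
      rw [hW]; exact le_refl (f ⟨x, hx⟩ n)
    exact mem_iUnion.2 ⟨_, hxW⟩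
  obtain ⟨S, hS⟩ := hA.exists_finset_subset_iUnion W hWo hcov
  refine ⟨fun n => (S n).sup id, fun x => ?_⟩
  obtain ⟨n, k, hk, hxk⟩ := by simpa only [mem_iUnion, exists_prop] using hS x.2
  have hxk : x ∈ Subtype.val ⁻¹' W n k := hxk
  rw [hW] at hxk
  exact ⟨n, hxk.trans (Finset.le_sup (f := id) hk)⟩

theorem not_of_homeomorph_baire (e : A ≃ₜ (ℕ → ℕ)) : ¬ MengerSet A := fun hA => by
  obtain ⟨g, hg⟩ := hA.exists_forall_exists_le_of_continuous e e.continuous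
  obtain ⟨n, hn⟩ := hg (e.symm (g + 1))
  simp only [Homeomorph.apply_symm_apply, Pi.add_apply, Pi.one_apply] at hn
  omega

end MengerSet

theorem hurewicz_dichotomy_implies_menger_conjecture (Γ : Set (Set ℝ))
    (hHD : ∀ A ∈ Γ, ¬ IsSigmaCompact A →
      ∃ K : Set ℝ, IsCompact K ∧ Nonempty (↥(K ∩ A) ≃ₜ (ℕ → ℕ))) :
    ∀ A ∈ Γ, MengerSet A → IsSigmaCompact A := by
  intro A hAΓ hA
  by_contra hσ
  obtain ⟨K, hK, ⟨e⟩⟩ := hHD A hAΓ hσ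
  exact MengerSet.not_of_homeomorph_baire e (hA.inter_isClosed hK.isClosed)
end

section
/- A separable metrizable space B is completely Baire if and only if B contains no closed subspace homeomorphic to the rationals ℚ. -/
/-!
A closed copy of `ℚ` is not a Baire space, as `ℚ` is the countable union of its nowhere dense
singletons. Conversely, if a closed set is not Baire, some nonempty closed `C` inside it is meagre
in itself: `C = ⋃ₙ Dₙ` with `Dₙ` closed and nowhere dense in `C`. Inside `C` we grow a tree of
points with closed balls around them, indexed by finite sequences of naturals: the children of a
node of depth `n` avoid `Dₙ`, converge to it, and have pairwise disjoint balls nested in its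
ball. The set of nodes is closed, since a limit point outside it would lie in a branch of nested
balls and hence avoid every `Dₙ`. Its topology only depends on the shape of the tree: a node
has a neighbourhood basis formed by the node and the subtrees of its children of large index. The
rationals carry a tree of the same shape, obtained by splitting an open set of rationals around
its first element (in a fixed enumeration) into shells with irrational radii, so the nodes form a
copy of `ℚ`.
-/

open Filter Topology Set Function Metric

noncomputable def Homeomorph.rangeOfComapNhdsEq {ι X Y : Type*} [TopologicalSpace X]
    [TopologicalSpace Y] {x : ι → X} {y : ι → Y} (hx : Injective x) (hy : Injective y)
    (h : ∀ i, comap x (𝓝 (x i)) = comap y (𝓝 (y i))) : range x ≃ₜ range y :=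
  letI : TopologicalSpace ι := .induced x ‹_›
  have hxy : TopologicalSpace.induced x ‹_› = .induced y ‹_› :=
    TopologicalSpace.ext_nhds fun i => by rw [nhds_induced, nhds_induced, h]
  (IsEmbedding.toHomeomorph ⟨⟨rfl⟩, hx⟩).symm.trans (IsEmbedding.toHomeomorph ⟨⟨hxy⟩, hy⟩)

lemma List.IsSuffix.eq_or_exists_cons_append {α : Type*} {s t : List α} (h : s <:+ t) :
    t = s ∨ ∃ k u, t = u ++ k :: s := by
  obtain ⟨u, rfl⟩ := h
  rcases u.eq_nil_or_concat with rfl | ⟨u, k, rfl⟩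
  · exact Or.inl rfl
  · exact Or.inr ⟨k, u, by simp⟩

/-- Children are prepended: `k :: s` is the `k`-th child of `s`. -/
def treeTail (s : List ℕ) (m : ℕ) : Set (List ℕ) := insert s {t | ∃ k ≥ m, k :: s <:+ t}

def treeNhds (s : List ℕ) : Filter (List ℕ) := ⨅ m, 𝓟 (treeTail s m)

lemma antitone_treeTail (s : List ℕ) : Antitone (treeTail s) := by
  intro m m' hm t ht
  rcases ht with rfl | ⟨k, hk, hkt⟩
  · exact mem_insert _ _
  · exact Or.inr ⟨k, hm.trans hk, hkt⟩

lemma hasBasis_treeNhds (s : List ℕ) : (treeNhds s).HasBasis (fun _ => True) (treeTail s) :=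
  hasBasis_iInf_principal (antitone_treeTail s).directed_ge

lemma eq_of_forall_mem_treeTail {s t : List ℕ} (h : ∀ m, t ∈ treeTail s m) : t = s := by
  by_contra hts
  obtain ⟨k, -, hk⟩ := (h 0).resolve_left hts
  obtain ⟨k', hkk', hk'⟩ := (h (k + 1)).resolve_left hts
  have : k :: s = k' :: s :=
    (List.suffix_of_suffix_length_le hk hk' (by simp)).eq_of_length (by simp)
  simp only [List.cons.injEq, and_true] at this
  omega

/-- `x` is an embedding for the topology on `List ℕ` whose neighbourhood filters are
`treeNhds`; `ratPoint` shows that this topology is that of `ℚ`. -/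
def IsTreeEmbedding {X : Type*} [TopologicalSpace X] (x : List ℕ → X) : Prop :=
  ∀ s, comap x (𝓝 (x s)) = treeNhds s

namespace IsTreeEmbedding

variable {X Y : Type*} [TopologicalSpace X] [TopologicalSpace Y] {x : List ℕ → X}
  {y : List ℕ → Y}

lemma injective (hx : IsTreeEmbedding x) : Injective x := by
  intro t s hts
  refine eq_of_forall_mem_treeTail fun m => ?_
  obtain ⟨U, hU, hUs⟩ := (hx s).symm ▸ (hasBasis_treeNhds s).mem_of_mem trivial
  exact hUs (hts ▸ mem_of_mem_nhds hU : x t ∈ U)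

noncomputable def homeomorphRange (hx : IsTreeEmbedding x) (hy : IsTreeEmbedding y) :
    range x ≃ₜ range y :=
  .rangeOfComapNhdsEq hx.injective hy.injective fun s => (hx s).trans (hy s).symm

end IsTreeEmbedding

lemma isTreeEmbedding_of_dist {X : Type*} [PseudoMetricSpace X] {x : List ℕ → X}
    (hsep : ∀ s m, ∃ ε > 0, ∀ t, dist (x t) (x s) < ε → t ∈ treeTail s m)
    (hconv : ∀ s, ∀ ε > 0, ∃ m, ∀ t ∈ treeTail s m, dist (x t) (x s) < ε) :
    IsTreeEmbedding x := fun s =>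
  (nhds_basis_ball.comap x).ext (hasBasis_treeNhds s)
    (fun ε hε => (hconv s ε hε).imp fun _ hm => ⟨trivial, hm⟩)
    (fun m _ => (hsep s m).imp fun _ ⟨hε, h⟩ => ⟨hε, h⟩)

section SetTree

variable {α : Type*} {S : List ℕ → Set α} {x : List ℕ → α}

lemma subset_of_suffix (hsub : ∀ s k, S (k :: s) ⊆ S s) {s t : List ℕ} (h : s <:+ t) :
    S t ⊆ S s := by
  obtain ⟨u, rfl⟩ := h
  induction u with
  | nil => exact subset_rfl
  | cons k u ih => exact (hsub _ k).trans ih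

lemma notMem_of_not_suffix (hsub : ∀ s k, S (k :: s) ⊆ S s) (hx : ∀ s, x s ∈ S s)
    (hcenter : ∀ s k, x s ∉ S (k :: s))
    (hdisj : ∀ s j k, j ≠ k → Disjoint (S (j :: s)) (S (k :: s))) :
    ∀ {s t : List ℕ}, ¬ s <:+ t → x t ∉ S s
  | [], _, h => absurd List.nil_suffix h
  | i :: r, t, h => by
    by_cases hr : r <:+ t
    · rcases hr.eq_or_exists_cons_append with rfl | ⟨j, u, rfl⟩
      · exact hcenter t i
      · have hji : j ≠ i := by rintro rfl; exact h ⟨u, rfl⟩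
        exact (hdisj r j i hji).notMem_of_mem_left (subset_of_suffix hsub ⟨u, rfl⟩ (hx _))
    · exact fun hxt => notMem_of_not_suffix hsub hx hcenter hdisj hr (hsub r i hxt)

end SetTree

lemma exists_div_two_pow_lt (r : ℝ) {ε : ℝ} (hε : 0 < ε) : ∃ k : ℕ, r / 2 ^ k < ε := by
  obtain ⟨k, hk⟩ := pow_unbounded_of_one_lt (r / ε) one_lt_two
  exact ⟨k, by rwa [div_lt_iff₀ (by positivity), ← div_lt_iff₀' hε]⟩

lemma div_two_pow_le_div_two_pow {r : ℝ} (hr : 0 ≤ r) {j k : ℕ} (h : j ≤ k) :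
    r / 2 ^ k ≤ r / 2 ^ j := by
  gcongr
  norm_num

structure RatCell where
  carrier : Set ℚ
  isOpen : IsOpen carrier
  nonempty : carrier.Nonempty

namespace RatCell

open Encodable

variable (I : RatCell)

/-- Taking the first rational of the cell in the enumeration makes every rational the center of
some cell of `ratCell`. -/
noncomputable def center : ℚ := argminOn encode I.carrier I.nonempty

lemma center_mem : I.center ∈ I.carrier := argminOn_mem _ _ _

lemma encode_center_le {I : RatCell} {q : ℚ} (hq : q ∈ I.carrier) : encode I.center ≤ encode q :=
  argminOn_le _ _ hq

lemma exists_radius : ∃ r : ℝ, Irrational r ∧ 0 < r ∧ ball I.center r ⊆ I.carrier := by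
  obtain ⟨ε, hε, hball⟩ := Metric.isOpen_iff.1 I.isOpen _ I.center_mem
  obtain ⟨r, hr, hr0, hrε⟩ := exists_irrational_btwn hε
  exact ⟨r, hr, hr0, (ball_subset_ball hrε.le).trans hball⟩

noncomputable def radius : ℝ := I.exists_radius.choose

lemma irrational_radius : Irrational I.radius := I.exists_radius.choose_spec.1

lemma radius_pos : 0 < I.radius := I.exists_radius.choose_spec.2.1

lemma ball_radius_subset : ball I.center I.radius ⊆ I.carrier :=
  I.exists_radius.choose_spec.2.2

/-- The shells tile `I.carrier \ {I.center}` (`exists_mem_shell`) because the radii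
`I.radius / 2 ^ k` are irrational, so no rational lies on their boundaries. -/
def shell (k : ℕ) : Set ℚ :=
  (if k = 0 then I.carrier else ball I.center (I.radius / 2 ^ k)) \
    closedBall I.center (I.radius / 2 ^ (k + 1))

variable {I}

lemma ball_div_two_pow_subset (k : ℕ) : ball I.center (I.radius / 2 ^ k) ⊆ I.carrier :=
  (ball_subset_ball (div_le_self I.radius_pos.le (one_le_pow₀ one_le_two))).trans
    I.ball_radius_subset

lemma shell_subset_ball {k : ℕ} (hk : k ≠ 0) : I.shell k ⊆ ball I.center (I.radius / 2 ^ k) := by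
  simp only [shell, if_neg hk, sdiff_subset]

lemma ball_diff_closedBall_subset_shell (k : ℕ) :
    ball I.center (I.radius / 2 ^ k) \ closedBall I.center (I.radius / 2 ^ (k + 1)) ⊆
      I.shell k := by
  unfold shell
  split_ifs with hk
  · subst hk
    exact sdiff_subset_sdiff_left (ball_div_two_pow_subset 0)
  · exact subset_rfl

lemma shell_subset (k : ℕ) : I.shell k ⊆ I.carrier := by
  unfold shell
  split_ifs
  · exact sdiff_subset
  · exact sdiff_subset.trans (ball_div_two_pow_subset k)

lemma lt_dist_of_mem_shell {k : ℕ} {q : ℚ} (hq : q ∈ I.shell k) :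
    I.radius / 2 ^ (k + 1) < dist q I.center :=
  not_le.1 hq.2

lemma center_notMem_shell (k : ℕ) : I.center ∉ I.shell k := fun h =>
  (lt_dist_of_mem_shell h).not_ge (by rw [dist_self]; have := I.radius_pos; positivity)

lemma isOpen_shell (k : ℕ) : IsOpen (I.shell k) := by
  unfold shell
  split_ifs
  exacts [I.isOpen.sdiff isClosed_closedBall, isOpen_ball.sdiff isClosed_closedBall]

lemma shell_nonempty (k : ℕ) : (I.shell k).Nonempty := by
  have hr := I.radius_pos
  have hlt : I.radius / 2 ^ (k + 1) < I.radius / 2 ^ k := by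
    rw [pow_succ, ← div_div]; exact div_two_lt_of_pos (by positivity)
  obtain ⟨q, hq₁, hq₂⟩ := exists_rat_btwn hlt
  have hdist : dist (I.center + q) I.center = q := by
    have : (0 : ℝ) < q := lt_trans (by positivity) hq₁
    rw [Rat.dist_eq]; push_cast
    rw [add_sub_cancel_left, abs_of_pos this]
  exact ⟨_, ball_diff_closedBall_subset_shell k
    ⟨by rw [mem_ball, hdist]; exact hq₂, by rw [mem_closedBall, hdist, not_le]; exact hq₁⟩⟩

lemma disjoint_shell {j k : ℕ} (h : j ≠ k) : Disjoint (I.shell j) (I.shell k) := by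
  wlog hjk : j < k generalizing j k
  · exact (this h.symm (h.lt_or_gt.resolve_left hjk)).symm
  refine disjoint_right.2 fun q hqk hqj => hqj.2 ?_
  exact ball_subset_closedBall
    (ball_subset_ball (div_two_pow_le_div_two_pow I.radius_pos.le hjk)
      (shell_subset_ball (by omega) hqk))

lemma exists_mem_shell {q : ℚ} (hq : q ∈ I.carrier) (hqc : q ≠ I.center) :
    ∃ k, q ∈ I.shell k := by
  classical
  have hex : ∃ k, I.radius / 2 ^ (k + 1) < dist q I.center :=
    (exists_div_two_pow_lt I.radius (dist_pos.2 hqc)).imp fun k hk =>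
      (div_two_pow_le_div_two_pow I.radius_pos.le k.le_succ).trans_lt hk
  refine ⟨Nat.find hex, ?_, not_le.2 (Nat.find_spec hex)⟩
  rcases h : Nat.find hex with _ | k
  · exact hq
  · rw [if_neg k.succ_ne_zero, mem_ball]
    refine lt_of_le_of_ne (not_lt.1 (Nat.find_min hex (h ▸ k.lt_succ_self))) fun heq => ?_
    have hirr : Irrational (I.radius / 2 ^ (k + 1)) := by
      exact_mod_cast I.irrational_radius.div_natCast (m := 2 ^ (k + 1)) (by positivity)
    exact hirr.ne_rat |q - I.center| (by rw [← heq, Rat.dist_eq]; push_cast; rfl)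

def child (I : RatCell) (k : ℕ) : RatCell := ⟨I.shell k, isOpen_shell k, shell_nonempty k⟩

end RatCell

open RatCell Encodable

def ratCell : List ℕ → RatCell
  | [] => ⟨univ, isOpen_univ, univ_nonempty⟩
  | k :: s => (ratCell s).child k

noncomputable def ratPoint (s : List ℕ) : ℚ := (ratCell s).center

lemma ratCell_cons_subset (s : List ℕ) (k : ℕ) :
    (ratCell (k :: s)).carrier ⊆ (ratCell s).carrier :=
  shell_subset k

lemma ratPoint_mem_shell (u s : List ℕ) (k : ℕ) : ratPoint (u ++ k :: s) ∈ (ratCell s).shell k :=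
  subset_of_suffix (S := fun s => (ratCell s).carrier) ratCell_cons_subset
    (List.suffix_append u (k :: s)) (center_mem _)

lemma ratPoint_notMem_of_not_suffix {s t : List ℕ} (h : ¬ s <:+ t) :
    ratPoint t ∉ (ratCell s).carrier :=
  notMem_of_not_suffix ratCell_cons_subset (fun _ => center_mem _)
    (fun _ k => center_notMem_shell k) (fun _ _ _ => disjoint_shell) h

lemma isTreeEmbedding_ratPoint : IsTreeEmbedding ratPoint := by
  refine isTreeEmbedding_of_dist (fun s m => ?_) (fun s ε hε => ?_)
  · have hr := (ratCell s).radius_pos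
    refine ⟨(ratCell s).radius / 2 ^ m, by positivity, fun t ht => ?_⟩
    have hst : s <:+ t := by
      by_contra h
      exact ratPoint_notMem_of_not_suffix h (ball_div_two_pow_subset m ht)
    rcases hst.eq_or_exists_cons_append with rfl | ⟨k, u, rfl⟩
    · exact mem_insert _ _
    · refine Or.inr ⟨k, not_lt.1 fun hkm => ?_, u, rfl⟩
      have h₁ := lt_dist_of_mem_shell (ratPoint_mem_shell u s k)
      have h₂ := div_two_pow_le_div_two_pow hr.le (Nat.succ_le_of_lt hkm)
      exact h₁.not_ge (ht.le.trans h₂)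
  · obtain ⟨m, hm⟩ := exists_div_two_pow_lt (ratCell s).radius hε
    refine ⟨m + 1, fun t ht => ?_⟩
    rcases ht with rfl | ⟨k, hk, u, rfl⟩
    · rwa [dist_self]
    · refine lt_of_lt_of_le ?_ ((div_two_pow_le_div_two_pow (ratCell s).radius_pos.le
        (Nat.le_of_succ_le hk)).trans hm.le)
      exact shell_subset_ball (by omega) (ratPoint_mem_shell u s k)

lemma exists_ratPoint_eq {s : List ℕ} {q : ℚ} (hq : q ∈ (ratCell s).carrier) :
    ∃ u, ratPoint (u ++ s) = q := by
  by_cases hc : q = ratPoint s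
  · exact ⟨[], hc.symm⟩
  obtain ⟨k, hk⟩ := exists_mem_shell hq hc
  have : encode q - encode (ratPoint (k :: s)) < encode q - encode (ratPoint s) := by
    have hle : encode (ratPoint (k :: s)) ≤ encode q := encode_center_le hk
    have hmem : ratPoint (k :: s) ∈ (ratCell s).shell k := center_mem (ratCell (k :: s))
    have hlt : encode (ratPoint s) < encode (ratPoint (k :: s)) :=
      (encode_center_le (shell_subset k hmem)).lt_of_ne fun h =>
        center_notMem_shell k (by convert hmem using 1; exact encode_injective h)
    omega
  obtain ⟨u, hu⟩ := exists_ratPoint_eq (s := k :: s) hk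
  exact ⟨u ++ [k], by simpa using hu⟩
termination_by encode q - encode (ratPoint s)

lemma ratPoint_surjective : Surjective ratPoint := fun q =>
  (exists_ratPoint_eq (s := []) (mem_univ q)).imp fun u hu => by simpa using hu

noncomputable def homeomorphRangeRatPoint : ℚ ≃ₜ range ratPoint :=
  (Homeomorph.Set.univ ℚ).symm.trans (.setCongr ratPoint_surjective.range_eq.symm)

structure NowhereDenseCover (X : Type*) [TopologicalSpace X] where
  set : ℕ → Set X
  isClosed : ∀ n, IsClosed (set n)
  interior_eq_empty : ∀ n, interior (set n) = ∅
  iUnion_eq_univ : ⋃ n, set n = univ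

lemma IsMeagre.nonempty_nowhereDenseCover {X : Type*} [TopologicalSpace X] [Nonempty X]
    (h : IsMeagre (univ : Set X)) : Nonempty (NowhereDenseCover X) := by
  obtain ⟨S, hS, hSc, hcov⟩ := isMeagre_iff_countable_union_isNowhereDense.1 h
  obtain ⟨t, ht, -⟩ := hcov (mem_univ (Classical.arbitrary X))
  obtain ⟨f, rfl⟩ := hSc.exists_eq_range ⟨t, ht⟩
  refine ⟨⟨fun n => closure (f n), fun n => isClosed_closure,
    fun n => hS _ (mem_range_self n), eq_univ_of_univ_subset ?_⟩⟩
  rw [sUnion_range] at hcov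
  exact hcov.trans (iUnion_mono fun n => subset_closure)

lemma NowhereDenseCover.not_isOpen_singleton {X : Type*} [TopologicalSpace X]
    (𝒟 : NowhereDenseCover X) (p : X) : ¬ IsOpen ({p} : Set X) := fun h => by
  obtain ⟨m, hm⟩ := mem_iUnion.1 (𝒟.iUnion_eq_univ.symm ▸ mem_univ p)
  have := interior_maximal (singleton_subset_iff.2 hm) h
  simp [𝒟.interior_eq_empty m] at this

structure PosBall (X : Type*) where
  center : X
  radius : ℝ
  radius_pos : 0 < radius

namespace PosBall

variable {X : Type*} [PseudoMetricSpace X] (v : PosBall X)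

def closedBall : Set X := Metric.closedBall v.center v.radius

lemma mem_closedBall {z : X} : z ∈ v.closedBall ↔ dist z v.center ≤ v.radius := Iff.rfl

lemma center_mem_closedBall : v.center ∈ v.closedBall := mem_closedBall_self v.radius_pos.le

lemma isClosed_closedBall : IsClosed v.closedBall := Metric.isClosed_closedBall

end PosBall

namespace NowhereDenseCover

variable {X : Type*} [MetricSpace X] (𝒟 : NowhereDenseCover X)

lemma exists_posBall_near (n : ℕ) (p : X) {β : ℝ} (hβ : 0 < β) :
    ∃ v : PosBall X, 0 < dist v.center p ∧ dist v.center p ≤ β ∧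
      v.radius ≤ dist v.center p / 4 ∧ Disjoint v.closedBall (𝒟.set n) := by
  have hne : (ball p β \ {p}).Nonempty := by
    by_contra h
    rw [not_nonempty_iff_eq_empty, sdiff_eq_empty] at h
    exact 𝒟.not_isOpen_singleton p (h.antisymm (singleton_subset_iff.2 (mem_ball_self hβ)) ▸
      isOpen_ball)
  have hdense := interior_eq_empty_iff_dense_compl.1 (𝒟.interior_eq_empty n)
  obtain ⟨q, ⟨hqβ, hqp⟩, hqD⟩ :=
    hdense.inter_open_nonempty _ (isOpen_ball.sdiff isClosed_singleton) hne
  obtain ⟨ε, hε, hεD⟩ := Metric.isOpen_iff.1 (𝒟.isClosed n).isOpen_compl q hqD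
  have hd : 0 < dist q p := dist_pos.2 hqp
  refine ⟨⟨q, min (ε / 2) (dist q p / 4), by positivity⟩, hd, (mem_ball.1 hqβ).le,
    min_le_right _ _, disjoint_left.2 fun z hz => hεD ?_⟩
  exact closedBall_subset_ball ((min_le_left _ _).trans_lt (half_lt_self hε)) hz

noncomputable def nearBall (n : ℕ) (p : X) (β : ℝ) (hβ : 0 < β) : PosBall X :=
  (𝒟.exists_posBall_near n p hβ).choose

/-- The children of `v` avoid `𝒟.set n`; the `k + 1`-st is chosen within the radius of the
`k`-th, so the children converge to `v.center` and their closed balls are pairwise disjoint. -/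
noncomputable def childBall (n : ℕ) (v : PosBall X) : ℕ → PosBall X
  | 0 => 𝒟.nearBall n v.center (v.radius / 2) (half_pos v.radius_pos)
  | k + 1 => 𝒟.nearBall n v.center (childBall n v k).radius (childBall n v k).radius_pos

noncomputable def treeBall (root : PosBall X) : List ℕ → PosBall X
  | [] => root
  | k :: s => 𝒟.childBall s.length (treeBall root s) k

noncomputable abbrev treePoint (root : PosBall X) (s : List ℕ) : X := (𝒟.treeBall root s).center

lemma nearBall_spec (n : ℕ) (p : X) {β : ℝ} (hβ : 0 < β) :
    0 < dist (𝒟.nearBall n p β hβ).center p ∧ dist (𝒟.nearBall n p β hβ).center p ≤ β ∧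
      (𝒟.nearBall n p β hβ).radius ≤ dist (𝒟.nearBall n p β hβ).center p / 4 ∧
      Disjoint (𝒟.nearBall n p β hβ).closedBall (𝒟.set n) :=
  (𝒟.exists_posBall_near n p hβ).choose_spec

section childBall

variable (n : ℕ) (v : PosBall X) (k : ℕ)

lemma dist_childBall_pos : 0 < dist (𝒟.childBall n v k).center v.center := by
  cases k <;> exact (𝒟.nearBall_spec _ _ _).1

lemma radius_childBall_le :
    (𝒟.childBall n v k).radius ≤ dist (𝒟.childBall n v k).center v.center / 4 := by
  cases k <;> exact (𝒟.nearBall_spec _ _ _).2.2.1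

lemma disjoint_childBall :
    Disjoint ((𝒟.childBall n v k).closedBall) (𝒟.set n) := by
  cases k <;> exact (𝒟.nearBall_spec _ _ _).2.2.2

lemma dist_childBall_succ_le : dist (𝒟.childBall n v (k + 1)).center v.center ≤
    dist (𝒟.childBall n v k).center v.center / 4 :=
  (𝒟.nearBall_spec _ _ _).2.1.trans (𝒟.radius_childBall_le n v k)

lemma dist_childBall_le : dist (𝒟.childBall n v k).center v.center ≤ v.radius / 2 ^ (k + 1) := by
  induction k with
  | zero => exact (𝒟.nearBall_spec n v.center (half_pos v.radius_pos)).2.1.trans_eq (by norm_num)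
  | succ k ih =>
    have : 0 < v.radius / 2 ^ (k + 1) := by have := v.radius_pos; positivity
    refine (𝒟.dist_childBall_succ_le n v k).trans ?_
    rw [pow_succ _ (k + 1), ← div_div]
    linarith

lemma dist_childBall_antitone : Antitone fun k => dist (𝒟.childBall n v k).center v.center :=
  antitone_nat_of_succ_le fun k =>
    (𝒟.dist_childBall_succ_le n v k).trans (div_le_self dist_nonneg (by norm_num))

variable {n v k} in
lemma dist_mem_Icc_of_mem_closedBall_childBall {z : X}
    (hz : z ∈ (𝒟.childBall n v k).closedBall) :
    dist z v.center ∈ Icc (3 / 4 * dist (𝒟.childBall n v k).center v.center)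
      (5 / 4 * dist (𝒟.childBall n v k).center v.center) := by
  have hr := 𝒟.radius_childBall_le n v k
  have h₁ := dist_triangle z (𝒟.childBall n v k).center v.center
  have h₂ := dist_triangle_left (𝒟.childBall n v k).center v.center z
  rw [PosBall.mem_closedBall] at hz
  constructor <;> linarith

lemma closedBall_childBall_subset :
    (𝒟.childBall n v k).closedBall ⊆
      v.closedBall := fun z hz => by
  have h₁ := (𝒟.dist_mem_Icc_of_mem_closedBall_childBall hz).2
  have h₂ := (𝒟.dist_childBall_le n v k).trans
    (div_two_pow_le_div_two_pow v.radius_pos.le (Nat.le_add_left 1 k))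
  have := v.radius_pos
  rw [PosBall.mem_closedBall]
  linarith

lemma center_notMem_closedBall_childBall :
    v.center ∉ (𝒟.childBall n v k).closedBall := fun h => by
  have h₁ := (𝒟.dist_mem_Icc_of_mem_closedBall_childBall h).1
  have h₂ := 𝒟.dist_childBall_pos n v k
  rw [dist_self] at h₁
  linarith

variable {k} in
lemma disjoint_closedBall_childBall {j : ℕ} (h : j ≠ k) :
    Disjoint ((𝒟.childBall n v j).closedBall)
      ((𝒟.childBall n v k).closedBall) := by
  wlog hjk : j < k generalizing j k
  · exact (this h.symm (h.lt_or_gt.resolve_left hjk)).symm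
  refine disjoint_left.2 fun z hzj hzk => ?_
  have h₁ := (𝒟.dist_mem_Icc_of_mem_closedBall_childBall hzj).1
  have h₂ := (𝒟.dist_mem_Icc_of_mem_closedBall_childBall hzk).2
  have h₃ := (𝒟.dist_childBall_antitone n v hjk).trans (𝒟.dist_childBall_succ_le n v j)
  have h₄ := 𝒟.dist_childBall_pos n v j
  linarith

end childBall

section treeBall

variable (root : PosBall X)

lemma treeBall_cons_subset (s : List ℕ) (k : ℕ) :
    (𝒟.treeBall root (k :: s)).closedBall ⊆ (𝒟.treeBall root s).closedBall :=
  𝒟.closedBall_childBall_subset _ _ k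

variable {root}

lemma treeBall_mem_closedBall_of_suffix {s t : List ℕ} (h : s <:+ t) :
    𝒟.treePoint root t ∈ (𝒟.treeBall root s).closedBall :=
  subset_of_suffix (S := fun s => (𝒟.treeBall root s).closedBall) (𝒟.treeBall_cons_subset root) h
    (PosBall.center_mem_closedBall _)

lemma treeBall_notMem_closedBall_of_not_suffix {s t : List ℕ} (h : ¬ s <:+ t) :
    𝒟.treePoint root t ∉ (𝒟.treeBall root s).closedBall :=
  notMem_of_not_suffix (𝒟.treeBall_cons_subset root) (fun _ => PosBall.center_mem_closedBall _)
    (fun _ k => 𝒟.center_notMem_closedBall_childBall _ _ k)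
    (fun _ _ _ => 𝒟.disjoint_closedBall_childBall _ _) h

variable (root)

lemma isTreeEmbedding_treePoint : IsTreeEmbedding (𝒟.treePoint root) := by
  refine isTreeEmbedding_of_dist (fun s m => ?_) (fun s ε hε => ?_)
  · set v := 𝒟.treeBall root s
    have hd := 𝒟.dist_childBall_pos s.length v m
    refine ⟨min v.radius (dist (𝒟.childBall s.length v m).center v.center / 2),
      lt_min v.radius_pos (half_pos hd), fun t ht => ?_⟩
    have hst : s <:+ t := by
      by_contra h
      exact 𝒟.treeBall_notMem_closedBall_of_not_suffix h (ht.le.trans (min_le_left _ _))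
    rcases hst.eq_or_exists_cons_append with rfl | ⟨k, u, rfl⟩
    · exact mem_insert _ _
    refine Or.inr ⟨k, ?_, u, rfl⟩
    by_contra! hkm
    have h₁ := (𝒟.dist_mem_Icc_of_mem_closedBall_childBall
      (𝒟.treeBall_mem_closedBall_of_suffix (root := root) (List.suffix_append u (k :: s)))).1
    have h₂ := 𝒟.dist_childBall_antitone s.length v hkm.le
    have h₃ := ht.trans_le (min_le_right _ _)
    linarith
  · set v := 𝒟.treeBall root s
    obtain ⟨m, hm⟩ := exists_div_two_pow_lt v.radius hε
    refine ⟨m, fun t ht => ?_⟩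
    rcases ht with rfl | ⟨k, hk, u, rfl⟩
    · rwa [dist_self]
    have h₁ := (𝒟.dist_mem_Icc_of_mem_closedBall_childBall
      (𝒟.treeBall_mem_closedBall_of_suffix (root := root) (List.suffix_append u (k :: s)))).2
    have h₂ := 𝒟.dist_childBall_antitone s.length v hk
    have h₃ := 𝒟.dist_childBall_le s.length v m
    have h₄ : v.radius / 2 ^ (m + 1) = v.radius / 2 ^ m / 2 := by rw [pow_succ, div_div]
    have h₅ : 0 ≤ v.radius / 2 ^ m := by have := v.radius_pos; positivity
    linarith

lemma exists_mem_closure_image_cons {b : X}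
    (hb : b ∉ range (𝒟.treePoint root)) {s : List ℕ}
    (hbs : b ∈ closure (𝒟.treePoint root '' {t | s <:+ t})) :
    ∃ k, b ∈ closure (𝒟.treePoint root '' {t | k :: s <:+ t}) := by
  set v := 𝒟.treeBall root s
  have hδ : 0 < dist b v.center := dist_pos.2 fun h => hb ⟨s, h.symm⟩
  obtain ⟨K, hK⟩ := exists_div_two_pow_lt v.radius hδ
  have hcover : 𝒟.treePoint root '' {t | s <:+ t} ⊆
      (⋃ k ∈ Finset.range K, 𝒟.treePoint root '' {t | k :: s <:+ t}) ∪
        closedBall v.center (5 / 4 * dist (𝒟.childBall s.length v K).center v.center) := by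
    rintro _ ⟨t, hst, rfl⟩
    rcases hst.eq_or_exists_cons_append with rfl | ⟨k, u, rfl⟩
    · exact Or.inr (mem_closedBall_self (by positivity))
    rcases lt_or_ge k K with hkK | hKk
    · exact Or.inl (mem_biUnion (Finset.mem_range.2 hkK) ⟨_, List.suffix_append u (k :: s), rfl⟩)
    · have h₁ := (𝒟.dist_mem_Icc_of_mem_closedBall_childBall
        (𝒟.treeBall_mem_closedBall_of_suffix (root := root) (List.suffix_append u (k :: s)))).2
      have h₂ := 𝒟.dist_childBall_antitone s.length v hKk
      exact Or.inr (mem_closedBall.2 (by linarith))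
  have hb' := closure_mono hcover hbs
  rw [closure_union, Finset.closure_biUnion, isClosed_closedBall.closure_eq] at hb'
  rcases hb' with hb' | hb'
  · simp only [mem_iUnion] at hb'
    obtain ⟨k, -, hk⟩ := hb'
    exact ⟨k, hk⟩
  · have h₁ := 𝒟.dist_childBall_le s.length v K
    have h₂ : v.radius / 2 ^ (K + 1) = v.radius / 2 ^ K / 2 := by rw [pow_succ, div_div]
    have h₃ : 0 ≤ v.radius / 2 ^ K := by have := v.radius_pos; positivity
    have h₄ := mem_closedBall.1 hb'
    linarith

lemma isClosed_range_treePoint : IsClosed (range (𝒟.treePoint root)) := by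
  refine isClosed_of_closure_subset fun b hb => ?_
  by_contra hbr
  have hlevel : ∀ n, ∃ s : List ℕ, s.length = n ∧
      b ∈ closure (𝒟.treePoint root '' {t | s <:+ t}) := by
    intro n
    induction n with
    | zero => exact ⟨[], rfl, by simpa [List.nil_suffix] using hb⟩
    | succ n ih =>
      obtain ⟨s, rfl, hs⟩ := ih
      obtain ⟨k, hk⟩ := 𝒟.exists_mem_closure_image_cons root hbr hs
      exact ⟨k :: s, rfl, hk⟩
  obtain ⟨n, hn⟩ := mem_iUnion.1 (𝒟.iUnion_eq_univ.symm ▸ mem_univ b)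
  obtain ⟨_ | ⟨k, s⟩, hs, hbs⟩ := hlevel (n + 1)
  · simp at hs
  have hbk : b ∈ (𝒟.treeBall root (k :: s)).closedBall :=
    (PosBall.isClosed_closedBall _).closure_subset_iff.2
      (image_subset_iff.2 fun t ht => 𝒟.treeBall_mem_closedBall_of_suffix ht) hbs
  simp only [List.length_cons, add_left_inj] at hs
  exact (𝒟.disjoint_childBall s.length _ k).notMem_of_mem_left hbk (hs ▸ hn)

end treeBall

end NowhereDenseCover

theorem NowhereDenseCover.exists_isClosedEmbedding_rat {X : Type*} [MetricSpace X] [Nonempty X]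
    (𝒟 : NowhereDenseCover X) : ∃ f : ℚ → X, IsClosedEmbedding f := by
  let root : PosBall X := ⟨Classical.arbitrary X, 1, one_pos⟩
  let e := homeomorphRangeRatPoint.trans
    (isTreeEmbedding_ratPoint.homeomorphRange (𝒟.isTreeEmbedding_treePoint root))
  exact ⟨Subtype.val ∘ e,
    (𝒟.isClosed_range_treePoint root).isClosedEmbedding_subtypeVal.comp e.isClosedEmbedding⟩

theorem exists_isClosedEmbedding_rat_of_isMeagre_univ {X : Type*} [TopologicalSpace X]
    [TopologicalSpace.MetrizableSpace X] [Nonempty X] (h : IsMeagre (univ : Set X)) :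
    ∃ f : ℚ → X, IsClosedEmbedding f := by
  let := TopologicalSpace.metrizableSpaceMetric X
  obtain ⟨𝒟⟩ := h.nonempty_nowhereDenseCover
  exact 𝒟.exists_isClosedEmbedding_rat

lemma dense_preimage_val_closure {X : Type*} [TopologicalSpace X] {U V : Set X}
    (h : U ⊆ closure (U ∩ V)) : Dense (Subtype.val ⁻¹' V : Set (closure U)) := by
  rw [Subtype.dense_iff, image_preimage_eq_inter_range, Subtype.range_coe]
  exact closure_minimal (h.trans (closure_mono fun x hx => ⟨hx.2, subset_closure hx.1⟩))
    isClosed_closure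

theorem exists_isClosed_isMeagre_univ_of_not_baireSpace {X : Type*} [TopologicalSpace X]
    (h : ¬ BaireSpace X) : ∃ C : Set X, IsClosed C ∧ C.Nonempty ∧ IsMeagre (univ : Set C) := by
  obtain ⟨f, hfo, hfd, hf⟩ : ∃ f : ℕ → Set X, (∀ n, IsOpen (f n)) ∧ (∀ n, Dense (f n)) ∧
      ¬ Dense (⋂ n, f n) := by
    by_contra! h'
    exact h ⟨h'⟩
  obtain ⟨U, hUo, hUne, hU⟩ : ∃ U, IsOpen U ∧ U.Nonempty ∧ ¬ (U ∩ ⋂ n, f n).Nonempty := by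
    simpa [dense_iff_inter_open] using hf
  refine ⟨closure U, isClosed_closure, hUne.closure, ?_⟩
  have hres : ∀ V, IsOpen V → U ⊆ closure (U ∩ V) →
      (Subtype.val ⁻¹' V : Set (closure U)) ∈ residual (closure U) := fun V hV hUV =>
    residual_of_dense_open (hV.preimage continuous_subtype_val) (dense_preimage_val_closure hUV)
  have hempty : (Subtype.val ⁻¹' U ∩ ⋂ n, Subtype.val ⁻¹' f n : Set (closure U)) = ∅ := by
    rw [← preimage_iInter, ← preimage_inter, not_nonempty_iff_eq_empty.1 hU, preimage_empty]
  rw [IsMeagre, compl_univ, ← hempty]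
  exact inter_mem (hres U hUo (by rw [inter_self]; exact subset_closure))
    (countable_iInter_mem.2 fun n => hres _ (hfo n) ((hfd n).open_subset_closure_inter hUo))

theorem not_baireSpace_rat : ¬ BaireSpace ℚ := fun _ => by
  obtain ⟨q, hq⟩ := nonempty_interior_of_iUnion_of_closed (f := fun q : ℚ => {q})
    (fun _ => isClosed_singleton) (iUnion_of_singleton ℚ)
  simp [interior_singleton] at hq

theorem completelyBaire_iff_no_closed_rationals_general (B : Type*) [TopologicalSpace B]
    [TopologicalSpace.MetrizableSpace B] :
    (∀ F : Set B, IsClosed F → BaireSpace ↥F) ↔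
      ¬ ∃ F : Set B, IsClosed F ∧ Nonempty (↥F ≃ₜ ℚ) := by
  refine ⟨fun h ⟨F, hF, ⟨e⟩⟩ => ?_, fun h F hF => ?_⟩
  · have := h F hF
    exact not_baireSpace_rat e.symm.isOpenEmbedding.baireSpace
  · by_contra hF'
    obtain ⟨C, hC, hCne, hCm⟩ := exists_isClosed_isMeagre_univ_of_not_baireSpace hF'
    have := hCne.to_subtype
    obtain ⟨f, hf⟩ := exists_isClosedEmbedding_rat_of_isMeagre_univ hCm
    have hg := hF.isClosedEmbedding_subtypeVal.comp (hC.isClosedEmbedding_subtypeVal.comp hf)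
    exact h ⟨range _, hg.isClosed_range, ⟨hg.toIsEmbedding.toHomeomorph.symm⟩⟩

theorem completelyBaire_iff_no_closed_rationals (B : Type*) [TopologicalSpace B]
    [TopologicalSpace.SeparableSpace B] [TopologicalSpace.MetrizableSpace B] :
    (∀ F : Set B, IsClosed F → BaireSpace ↥F) ↔
      ¬ ∃ F : Set B, IsClosed F ∧ Nonempty (↥F ≃ₜ ℚ) :=
  completelyBaire_iff_no_closed_rationals_general B
end

section
/- Suppose every non-σ-compact co-analytic subset of ℝ contains a compact set K such that K minus the co-analytic set is a countable dense subset of K homeomorphic to ℚ. Then every analytic completely Baire subset of ℝ is Gδ in ℝ. -/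
/-!
If `Aᶜ` is σ-compact then `A` is Gδ. Otherwise the hypothesis yields a compact `K` with
`K ∩ A ≃ₜ ℚ`; but `K ∩ A` is closed in `A`, hence Baire, while `ℚ` is not.
-/

open Topology Filter Set

theorem not_baireSpace_of_countable (X : Type*) [TopologicalSpace X] [T1Space X] [Countable X]
    [Nonempty X] [∀ x : X, NeBot (𝓝[≠] x)] : ¬ BaireSpace X := fun _ => by
  have hdense : Dense (⋂ x : X, ({x}ᶜ : Set X)) :=
    dense_iInter_of_isOpen (fun _ => isOpen_compl_singleton) (fun x => dense_compl_singleton x)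
  simpa using hdense.nonempty

theorem IsSigmaCompact.isGδ_compl {X : Type*} [TopologicalSpace X] [T2Space X] {s : Set X}
    (hs : IsSigmaCompact s) : IsGδ sᶜ := by
  obtain ⟨K, hK, rfl⟩ := hs
  rw [compl_iUnion]
  exact .iInter fun n => (hK n).isClosed.isOpen_compl.isGδ

def Homeomorph.preimageValInter {X : Type*} [TopologicalSpace X] (s K : Set X) :
    (Subtype.val ⁻¹' K : Set s) ≃ₜ ↥(K ∩ s) where
  toFun x := ⟨x.1.1, x.2, x.1.2⟩
  invFun y := ⟨⟨y.1, y.2.2⟩, y.2.1⟩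
  continuous_toFun := by fun_prop
  continuous_invFun := by fun_prop

theorem BaireSpace.inter_of_isClosed {X : Type*} [TopologicalSpace X] {s K : Set X}
    (hs : ∀ F : Set s, IsClosed F → BaireSpace F) (hK : IsClosed K) : BaireSpace ↥(K ∩ s) :=
  have := hs _ (hK.preimage continuous_subtype_val)
  (Homeomorph.preimageValInter s K).symm.isOpenEmbedding.baireSpace

theorem coanalytic_HD_implies_analytic_completelyBaire_gdelta
    (hHD : ∀ C : Set ℝ, MeasureTheory.AnalyticSet Cᶜ → ¬ IsSigmaCompact C →
      ∃ K : Set ℝ, IsCompact K ∧ (K \ C).Countable ∧ K ⊆ closure (K \ C) ∧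
        Nonempty (↥(K \ C) ≃ₜ ℚ)) :
    ∀ A : Set ℝ, MeasureTheory.AnalyticSet A →
      (∀ F : Set ↥A, IsClosed F → BaireSpace ↥F) → IsGδ A := by
  intro A hA hA_baire
  by_contra hA_not_gδ
  have hσ : ¬ IsSigmaCompact Aᶜ := fun h => hA_not_gδ (compl_compl A ▸ h.isGδ_compl)
  obtain ⟨K, hK, -, -, ⟨e⟩⟩ := hHD Aᶜ (by rwa [compl_compl]) hσ
  rw [sdiff_compl] at e
  have := BaireSpace.inter_of_isClosed hA_baire hK.isClosed
  exact not_baireSpace_of_countable ℚ e.symm.isOpenEmbedding.baireSpace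
end

section
/- If S is a subset of ℕ^ℕ that is ω₁-concentrated on a countable set Q ⊆ ℕ^ℕ in the following sense — S has cardinality ℵ₁ and for every open set U ⊇ Q the complement S \ U has cardinality less than ℵ₁ (i.e., is countable) — and every countable subset of ℕ^ℕ is Menger, then S ∪ Q is Menger. -/
lemma exists_interleaved_selection {α : Type*} (e : ℕ ⊕ ℕ ≃ ℕ) {U : ℕ → Set (Set α)}
    {V₁ V₂ : ℕ → Finset (Set α)} (h₁ : ∀ n, ↑(V₁ n) ⊆ U (e (.inl n)))
    (h₂ : ∀ n, ↑(V₂ n) ⊆ U (e (.inr n))) :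
    ∃ V : ℕ → Finset (Set α), (∀ n, ↑(V n) ⊆ U n) ∧
      ⋃ n, ⋃₀ (V n : Set (Set α)) =
        (⋃ n, ⋃₀ (V₁ n : Set (Set α))) ∪ ⋃ n, ⋃₀ (V₂ n : Set (Set α)) := by
  refine ⟨fun n => Sum.elim V₁ V₂ (e.symm n), e.surjective.forall.2 ?_, ?_⟩
  · rintro (k | k) <;> simp [h₁, h₂]
  · exact (e.symm.surjective.iUnion_comp fun i => ⋃₀ (↑(Sum.elim V₁ V₂ i) : Set (Set α))).trans
      Set.iUnion_sum

lemma MengerSet.union_of_forall_isOpen {X : Type*} [TopologicalSpace X] {A B : Set X}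
    (hA : MengerSet A) (hB : ∀ W, IsOpen W → A ⊆ W → MengerSet (B \ W)) :
    MengerSet (B ∪ A) := by
  intro U hU hcov
  set e := Equiv.natSumNatEquivNat
  obtain ⟨V₁, hV₁U, hAV₁⟩ := hA (fun n => U (e (.inl n))) (fun n => hU _)
    (fun n => Set.subset_union_right.trans (hcov _))
  set W := ⋃ n, ⋃₀ (V₁ n : Set (Set X))
  have hW : IsOpen W := isOpen_iUnion fun n => isOpen_sUnion fun s hs => hU _ s (hV₁U n hs)
  obtain ⟨V₂, hV₂U, hBV₂⟩ := hB W hW hAV₁ (fun n => U (e (.inr n))) (fun n => hU _)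
    (fun n => Set.sdiff_subset.trans (Set.subset_union_left.trans (hcov _)))
  obtain ⟨V, hVU, hV⟩ := exists_interleaved_selection e hV₁U hV₂U
  refine ⟨V, hVU, ?_⟩
  calc B ∪ A ⊆ W ∪ (B \ W) := by
        rw [Set.union_sdiff_self]
        exact Set.union_subset Set.subset_union_right (hAV₁.trans Set.subset_union_left)
    _ ⊆ _ := hV ▸ Set.union_subset_union_right W hBV₂

theorem concentrated_union_menger_general (S Q : Set (ℕ → ℕ)) (hQ : Q.Countable)
    (hconc : ∀ U : Set (ℕ → ℕ), IsOpen U → Q ⊆ U → (S \ U).Countable)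
    (hctbl : ∀ C : Set (ℕ → ℕ), C.Countable → MengerSet C) :
    MengerSet (S ∪ Q) :=
  (hctbl Q hQ).union_of_forall_isOpen fun W hW hQW => hctbl _ (hconc W hW hQW)

theorem concentrated_union_menger (S Q : Set (ℕ → ℕ)) (hQ : Q.Countable)
    (hcard : Cardinal.mk ↥S = Cardinal.aleph 1)
    (hconc : ∀ U : Set (ℕ → ℕ), IsOpen U → Q ⊆ U → (S \ U).Countable)
    (hctbl : ∀ C : Set (ℕ → ℕ), C.Countable → MengerSet C) :
    MengerSet (S ∪ Q) :=
  concentrated_union_menger_general S Q hQ hconc hctbl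
end
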